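/- arXiv:2205.08665 — 3 statements merged into one kernel-verified Lean document; each statement's English description precedes it below -/
import Mathlib

section
/- Let s be a spin configuration on a finite simple graph G. Then the sum of the unnormalized joint vertex–edge weights over all edge configurations equals e^{−β|E(G)|} times the unnormalized Gibbs weight: Σ_{w : E(G)→{0,1}} W_VE(s,w) = e^{−β·|E(G)|} · W_V(s). -/
open Classical

noncomputable section

variable {V : Type*} [Fintype V] [DecidableEq V]

/-- Product `s i * s j` of spins over an unordered edge `{i, j}`. -/
def pairProd (s : V → ℝ) : Sym2 V → ℝ :=
  Sym2.lift ⟨fun i j => s i * s j, fun _ _ => mul_comm _ _⟩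

/-- Unnormalized Gibbs weight
`W_V(s) = exp (β Σ_{{i,j} ∈ E} s_i s_j + β Σ_i h_i s_i)`. -/
def WV (G : SimpleGraph V) [DecidableRel G.Adj] (β : ℝ) (h : V → ℝ) (s : V → ℝ) : ℝ :=
  Real.exp (β * ∑ e ∈ G.edgeFinset, pairProd s e + β * ∑ i : V, h i * s i)

/-- Edge factor of the joint vertex-edge weight:
`(1 - e^{-2β})` if `w_{ij} = 1` and `s_i = s_j`, `e^{-2β}` if `w_{ij} = 0`, else `0`. -/
def edgeFactorVE (β : ℝ) (s : V → ℝ) (b : Bool) : Sym2 V → ℝ :=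
  Sym2.lift ⟨fun i j =>
    if b then (if s i = s j then 1 - Real.exp (-2 * β) else 0) else Real.exp (-2 * β),
    by intro i j; by_cases hb : b <;> simp [hb, eq_comm]⟩

/-- Unnormalized joint vertex-edge weight `W_VE(s, w)`. -/
def WVE (G : SimpleGraph V) [DecidableRel G.Adj] (β : ℝ) (h : V → ℝ) (s : V → ℝ)
    (w : G.edgeSet → Bool) : ℝ :=
  (∏ e : G.edgeSet, edgeFactorVE β s (w e) e.val) * Real.exp (β * ∑ i : V, h i * s i)

/-- Edge factor of the Swendsen-Wang edge-step probability: if `s_i = s_j` then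
`(1 - e^{-2β})` for `w_{ij} = 1` and `e^{-2β}` for `w_{ij} = 0`; otherwise `0` for
`w_{ij} = 1` and `1` for `w_{ij} = 0`. -/
def edgeFactorP (β : ℝ) (s : V → ℝ) (b : Bool) : Sym2 V → ℝ :=
  Sym2.lift ⟨fun i j =>
    if s i = s j then (if b then 1 - Real.exp (-2 * β) else Real.exp (-2 * β))
    else (if b then 0 else 1),
    by intro i j; simp [eq_comm]⟩

/-- Swendsen-Wang edge-step probability `P(s, w)`. -/
def swP (G : SimpleGraph V) [DecidableRel G.Adj] (β : ℝ) (s : V → ℝ)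
    (w : G.edgeSet → Bool) : ℝ :=
  ∏ e : G.edgeSet, edgeFactorP β s (w e) e.val

/-- Spanning subgraph of `G` whose edges are the edges `e` with `w e = 1`. -/
def openSubgraph (G : SimpleGraph V) [DecidableRel G.Adj] (w : G.edgeSet → Bool) :
    SimpleGraph V where
  Adj i j := ∃ hij : G.Adj i j, w ⟨s(i, j), G.mem_edgeSet.mpr hij⟩ = true
  symm := by
    refine ⟨?_⟩
    rintro i j ⟨hij, hw⟩
    refine ⟨hij.symm, ?_⟩
    have he : (⟨s(j, i), G.mem_edgeSet.mpr hij.symm⟩ : G.edgeSet)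
        = ⟨s(i, j), G.mem_edgeSet.mpr hij⟩ := Subtype.ext (Sym2.eq_swap)
    rw [he]; exact hw
  loopless := by refine ⟨?_⟩; rintro i ⟨hij, -⟩; exact G.irrefl hij

/-- `h_γ = Σ_{i ∈ γ} h_i`: sum of the field over a connected component `γ ∈ C_w`. -/
def hComp (G : SimpleGraph V) [DecidableRel G.Adj] (h : V → ℝ) (w : G.edgeSet → Bool)
    (γ : (openSubgraph G w).ConnectedComponent) : ℝ :=
  ∑ i ∈ Finset.univ.filter (fun i => (openSubgraph G w).connectedComponentMk i = γ), h i

/-- A configuration is compatible with the edge configuration `w` if it is constant on each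
connected component of the subgraph of open edges. -/
def Compatible (G : SimpleGraph V) [DecidableRel G.Adj] (w : G.edgeSet → Bool)
    (t : V → ℝ) : Prop :=
  ∀ i j : V, (openSubgraph G w).connectedComponentMk i = (openSubgraph G w).connectedComponentMk j
    → t i = t j

/-- Swendsen-Wang spin-step probability `Q(w, t)`: for `t` compatible with `w`, the product
over components `γ ∈ C_w` of `e^{β h_γ τ_γ} / (e^{β h_γ} + e^{-β h_γ})`, where
`τ_γ = t γ.out` is the common value of `t` on `γ`; and `0` for incompatible `t`. -/
def swQ (G : SimpleGraph V) [DecidableRel G.Adj] (β : ℝ) (h : V → ℝ) (w : G.edgeSet → Bool)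
    (t : V → ℝ) : ℝ :=
  if Compatible G w t then
    ∏ γ : (openSubgraph G w).ConnectedComponent,
      Real.exp (β * hComp G h w γ * t γ.out) /
        (Real.exp (β * hComp G h w γ) + Real.exp (-(β * hComp G h w γ)))
  else 0

/-- Unnormalized edge weight
`W_E(w) = Π_{w_e = 1} (1 - e^{-2β}) · Π_{w_e = 0} e^{-2β} · Π_{γ ∈ C_w} (e^{β h_γ} + e^{-β h_γ})`. -/
def WE (G : SimpleGraph V) [DecidableRel G.Adj] (β : ℝ) (h : V → ℝ)
    (w : G.edgeSet → Bool) : ℝ :=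
  (∏ _e ∈ Finset.univ.filter (fun e : G.edgeSet => w e = true), (1 - Real.exp (-2 * β))) *
  (∏ _e ∈ Finset.univ.filter (fun e : G.edgeSet => w e = false), Real.exp (-2 * β)) *
  ∏ γ : (openSubgraph G w).ConnectedComponent,
    (Real.exp (β * hComp G h w γ) + Real.exp (-(β * hComp G h w γ)))

/-
Summing out the edge variable of a single edge `{i, j}` gives
`[s_i = s_j] (1 - e^{-2β}) + e^{-2β} = e^{β (s_i s_j - 1)}` for `±1` spins,
and the edge variables are independent, so the sum over `w` factorises over the edges.
-/

lemma indicator_add_exp_eq_exp_mul_sub_one (β : ℝ) {x y : ℝ}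
    (hx : x = 1 ∨ x = -1) (hy : y = 1 ∨ y = -1) :
    (if x = y then 1 - Real.exp (-2 * β) else 0) + Real.exp (-2 * β)
      = Real.exp (β * (x * y - 1)) := by
  rcases hx with rfl | rfl <;> rcases hy with rfl | rfl <;> norm_num <;> ring_nf

omit [Fintype V] [DecidableEq V] in
lemma sum_edgeFactorVE (β : ℝ) {s : V → ℝ} (hs : ∀ i, s i = 1 ∨ s i = -1) (e : Sym2 V) :
    ∑ b : Bool, edgeFactorVE β s b e = Real.exp (β * (pairProd s e - 1)) := by
  induction e using Sym2.inductionOn with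
  | hf i j =>
    simpa [edgeFactorVE, pairProd] using indicator_add_exp_eq_exp_mul_sub_one β (hs i) (hs j)

lemma sum_WVE_eq_prod_sum_edgeFactorVE (G : SimpleGraph V) [DecidableRel G.Adj] (β : ℝ)
    (h s : V → ℝ) :
    ∑ w : G.edgeSet → Bool, WVE G β h s w
      = (∏ e ∈ G.edgeFinset, ∑ b : Bool, edgeFactorVE β s b e)
          * Real.exp (β * ∑ i : V, h i * s i) := by
  simp only [WVE, ← Finset.sum_mul]
  congr 1
  calc ∑ w : G.edgeSet → Bool, ∏ e : G.edgeSet, edgeFactorVE β s (w e) e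
      = ∏ e : G.edgeSet, ∑ b : Bool, edgeFactorVE β s b e := by
        rw [Fintype.prod_sum]
    _ = ∏ e ∈ G.edgeFinset, ∑ b : Bool, edgeFactorVE β s b e :=
      Finset.prod_set_coe (f := fun e => ∑ b : Bool, edgeFactorVE β s b e) _

theorem sum_WVE_over_edgeConfigs_general (G : SimpleGraph V) [DecidableRel G.Adj]
    (β : ℝ) (h : V → ℝ)
    (s : V → ℝ) (hs : ∀ i, s i = 1 ∨ s i = -1) :
    ∑ w : G.edgeSet → Bool, WVE G β h s w
      = Real.exp (-β * G.edgeFinset.card) * WV G β h s := by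
  rw [sum_WVE_eq_prod_sum_edgeFactorVE, Finset.prod_congr rfl fun e _ => sum_edgeFactorVE β hs e,
    ← Real.exp_sum, WV, ← Real.exp_add, ← Real.exp_add]
  congr 1
  simp only [mul_sub, mul_one, Finset.sum_sub_distrib, Finset.sum_const, nsmul_eq_mul,
    ← Finset.mul_sum]
  ring

/-- For any spin configuration `s`, summing the unnormalized joint vertex-edge
weights over all edge configurations gives `e^{-β |E(G)|}` times the unnormalized Gibbs
weight: `Σ_w W_VE(s, w) = e^{-β |E(G)|} · W_V(s)`. -/
theorem sum_WVE_over_edgeConfigs (G : SimpleGraph V) [DecidableRel G.Adj]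
    (β : ℝ) (hβ : 0 < β) (h : V → ℝ)
    (s : V → ℝ) (hs : ∀ i, s i = 1 ∨ s i = -1) :
    ∑ w : G.edgeSet → Bool, WVE G β h s w
      = Real.exp (-β * G.edgeFinset.card) * WV G β h s :=
  sum_WVE_over_edgeConfigs_general G β h s hs

end
end

section
/- Annealed importance sampling path-reversal identity: let S be a finite type, L ≥ 1, let p_0, p_1, …, p_L : S → ℝ be functions that are strictly positive everywhere, and let T_1, …, T_{L−1} : S × S → ℝ satisfy detailed balance p_l(s) T_l(s,t) = p_l(t) T_l(t,s) for all s, t ∈ S and 1 ≤ l ≤ L−1. Then for every path x_1, …, x_L ∈ S, p_0(x_1) · (Π_{l=1}^{L−1} T_l(x_l, x_{l+1})) · (Π_{l=1}^{L} p_l(x_l)/p_{l−1}(x_l)) = p_L(x_L) · Π_{l=1}^{L−1} T_l(x_{l+1}, x_l). -/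
/-!
Induct on the path length. Appending a step `x (n+1) → x (n+2)` multiplies the forward side by
`T (n+1) (x (n+1)) (x (n+2)) * p (n+2) (x (n+2)) / p (n+1) (x (n+2))`; detailed balance of
`T (n+1)` turns this into the backward factor `T (n+1) (x (n+2)) (x (n+1))` times
`p (n+2) (x (n+2)) / p (n+1) (x (n+1))`, and that ratio moves the endpoint density of the
backward side from `p (n+1)` to `p (n+2)`.
-/

open Finset

theorem forward_mul_ais_weight_eq_backward {S : Type*} (p : ℕ → S → ℝ)
    (T : ℕ → S → S → ℝ) (x : ℕ → S) (n : ℕ) (hp : ∀ l ≤ n, p l (x (l + 1)) ≠ 0)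
    (hdb : ∀ l ∈ Icc 1 n,
      p l (x l) * T l (x l) (x (l + 1)) = p l (x (l + 1)) * T l (x (l + 1)) (x l)) :
    p 0 (x 1) * (∏ l ∈ Icc 1 n, T l (x l) (x (l + 1))) *
        (∏ l ∈ Icc 1 (n + 1), p l (x l) / p (l - 1) (x l)) =
      p (n + 1) (x (n + 1)) * ∏ l ∈ Icc 1 n, T l (x (l + 1)) (x l) := by
  induction n with
  | zero =>
    have hp0 := hp 0 le_rfl
    simp only [zero_add, Icc_self, prod_singleton, Icc_eq_empty_of_lt zero_lt_one, prod_empty]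
    field_simp
  | succ n ih =>
    have ih := ih (fun l hl => hp l (by omega)) (fun l hl => hdb l (by simp at hl ⊢; omega))
    have hstep := hdb (n + 1) (by simp)
    have hne := hp (n + 1) le_rfl
    rw [prod_Icc_succ_top (by omega : 1 ≤ n + 1 + 1), Nat.add_sub_cancel,
      prod_Icc_succ_top (by omega : 1 ≤ n + 1) (fun l => T l (x l) (x (l + 1))),
      prod_Icc_succ_top (by omega : 1 ≤ n + 1) (fun l => T l (x (l + 1)) (x l))]
    set F := ∏ l ∈ Icc 1 n, T l (x l) (x (l + 1))
    set B := ∏ l ∈ Icc 1 n, T l (x (l + 1)) (x l)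
    set W := ∏ l ∈ Icc 1 (n + 1), p l (x l) / p (l - 1) (x l)
    calc p 0 (x 1) * (F * T (n + 1) (x (n + 1)) (x (n + 2))) *
          (W * (p (n + 2) (x (n + 2)) / p (n + 1) (x (n + 2))))
        = p 0 (x 1) * F * W * T (n + 1) (x (n + 1)) (x (n + 2)) *
          p (n + 2) (x (n + 2)) / p (n + 1) (x (n + 2)) := by ring
      _ = p (n + 1) (x (n + 1)) * T (n + 1) (x (n + 1)) (x (n + 2)) *
          (p (n + 2) (x (n + 2)) * B) / p (n + 1) (x (n + 2)) := by
        rw [ih]; ring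
      _ = p (n + 2) (x (n + 2)) * (B * T (n + 1) (x (n + 2)) (x (n + 1))) := by
        rw [hstep]; field_simp

theorem ais_path_reversal_general (S : Type*) (L : ℕ) (hL : 1 ≤ L)
    (p : ℕ → S → ℝ) (hp : ∀ l ≤ L, ∀ s : S, 0 < p l s)
    (T : ℕ → S → S → ℝ)
    (hdb : ∀ l, 1 ≤ l → l ≤ L - 1 → ∀ s t : S, p l s * T l s t = p l t * T l t s)
    (x : ℕ → S) :
    p 0 (x 1) * (∏ l ∈ Finset.Icc 1 (L - 1), T l (x l) (x (l + 1))) *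
      (∏ l ∈ Finset.Icc 1 L, p l (x l) / p (l - 1) (x l))
    = p L (x L) * ∏ l ∈ Finset.Icc 1 (L - 1), T l (x (l + 1)) (x l) := by
  obtain ⟨n, rfl⟩ : ∃ n, L = n + 1 := ⟨L - 1, by omega⟩
  rw [Nat.add_sub_cancel]
  refine forward_mul_ais_weight_eq_backward p T x n (fun l hl => (hp l (by omega) _).ne') ?_
  intro l hl
  exact hdb l (mem_Icc.1 hl).1 (by simp at hl; omega) _ _

/-- Annealed importance sampling path-reversal identity. Let `S` be a finite
type, `L ≥ 1`, `p 0, …, p L : S → ℝ` strictly positive, and let the kernels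
`T 1, …, T (L-1)` satisfy detailed balance `p l s * T l s t = p l t * T l t s`. Then for
every path `x 1, …, x L` in `S`, the forward path probability times the importance weight
`Π_{l=1}^{L} p l (x l) / p (l-1) (x l)` equals the backward path probability
`p L (x L) · Π_{l=1}^{L-1} T l (x (l+1)) (x l)`. -/
theorem ais_path_reversal (S : Type*) [Fintype S] (L : ℕ) (hL : 1 ≤ L)
    (p : ℕ → S → ℝ) (hp : ∀ l ≤ L, ∀ s : S, 0 < p l s)
    (T : ℕ → S → S → ℝ)
    (hdb : ∀ l, 1 ≤ l → l ≤ L - 1 → ∀ s t : S, p l s * T l s t = p l t * T l t s)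
    (x : ℕ → S) :
    p 0 (x 1) * (∏ l ∈ Finset.Icc 1 (L - 1), T l (x l) (x (l + 1))) *
      (∏ l ∈ Finset.Icc 1 L, p l (x l) / p (l - 1) (x l))
    = p L (x L) * ∏ l ∈ Finset.Icc 1 (L - 1), T l (x (l + 1)) (x l) :=
  ais_path_reversal_general S L hL p hp T hdb x
end

section
/- Correctness of annealed importance sampling: let S be a finite type, L ≥ 1, let p_0, p_1, …, p_L : S → ℝ be strictly positive functions with Σ_{s∈S} p_0(s) = 1 and Σ_{s∈S} p_L(s) = 1, and let T_1, …, T_{L−1} : S × S → ℝ be nonnegative kernels satisfying detailed balance p_l(s) T_l(s,t) = p_l(t) T_l(t,s) and row-stochasticity Σ_{t∈S} T_l(s,t) = 1 for all s, t ∈ S and 1 ≤ l ≤ L−1. Then for every t ∈ S, Σ over all paths (x_1, …, x_L) ∈ S^L with x_L = t of p_0(x_1) · (Π_{l=1}^{L−1} T_l(x_l, x_{l+1})) · (Π_{l=1}^{L} p_l(x_l)/p_{l−1}(x_l)) equals p_L(t). -/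
open Classical

lemma lemA {S : Type*} [Fintype S] (p : ℕ → S → ℝ) (T : ℕ → S → S → ℝ) :
    ∀ M : ℕ, (∀ l ≤ M + 1, ∀ s : S, 0 < p l s) →
      (∀ l, 1 ≤ l → l ≤ M → ∀ s t : S, p l s * T l s t = p l t * T l t s) →
      ∀ x : Fin (M + 1) → S,
      p 0 (x 0) * (∏ l : Fin M, T (l.1 + 1) (x l.castSucc) (x l.succ)) *
        (∏ l : Fin (M + 1), p (l.1 + 1) (x l) / p l.1 (x l))
      = p (M + 1) (x (Fin.last M)) * ∏ l : Fin M, T (l.1 + 1) (x l.succ) (x l.castSucc) := by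
  intro M
  induction M with
  | zero =>
    intro hp _ x
    have h0 := (hp 0 (by norm_num) (x 0)).ne'
    simp only [Finset.univ_eq_empty, Finset.prod_empty, Fin.prod_univ_succ, Fin.val_zero,
      mul_one, one_mul]
    have : x (Fin.last 0) = x 0 := rfl
    rw [this]
    field_simp
  | succ M ih =>
    intro hp hdb x
    have hinit := ih (fun l hl => hp l (by omega))
      (fun l h1 h2 => hdb l h1 (by omega)) (Fin.init x)
    rw [show Fin.init x (Fin.last M) = x (Fin.last M).castSucc from rfl,
        show Fin.init x 0 = x 0 from rfl] at hinit
    rw [Fin.prod_univ_castSucc (f := fun l : Fin (M+1) =>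
          T (l.1 + 1) (x l.castSucc) (x l.succ)),
        Fin.prod_univ_castSucc (f := fun l : Fin (M+2) =>
          p (l.1 + 1) (x l) / p l.1 (x l)),
        Fin.prod_univ_castSucc (f := fun l : Fin (M+1) =>
          T (l.1 + 1) (x l.succ) (x l.castSucc))]
    have P1 : ∏ l : Fin M, T ((l.castSucc).1 + 1) (x l.castSucc.castSucc) (x l.castSucc.succ)
        = ∏ l : Fin M, T (l.1 + 1) (Fin.init x l.castSucc) (Fin.init x l.succ) :=
      Finset.prod_congr rfl (fun l _ => by
        rw [Fin.coe_castSucc, Fin.succ_castSucc]; rfl)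
    have P2 : ∏ l : Fin (M+1),
          p ((l.castSucc).1 + 1) (x l.castSucc) / p (l.castSucc).1 (x l.castSucc)
        = ∏ l : Fin (M+1), p (l.1 + 1) (Fin.init x l) / p l.1 (Fin.init x l) :=
      Finset.prod_congr rfl (fun l _ => by rw [Fin.coe_castSucc]; rfl)
    have P3 : ∏ l : Fin M, T ((l.castSucc).1 + 1) (x l.castSucc.succ) (x l.castSucc.castSucc)
        = ∏ l : Fin M, T (l.1 + 1) (Fin.init x l.succ) (Fin.init x l.castSucc) :=
      Finset.prod_congr rfl (fun l _ => by
        rw [Fin.coe_castSucc, Fin.succ_castSucc]; rfl)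
    rw [P1, P2, P3]
    simp only [Fin.val_last]
    rw [show (Fin.last M).succ = Fin.last (M+1) from rfl]
    set a := x (Fin.last M).castSucc with ha
    set b := x (Fin.last (M+1)) with hb
    have hdb1 := hdb (M + 1) (by omega) (by omega) a b
    have hne := (hp (M + 1) (by omega) b).ne'
    set A := ∏ l : Fin M, T (l.1 + 1) (Fin.init x l.castSucc) (Fin.init x l.succ)
    set B := ∏ l : Fin (M+1), p (l.1 + 1) (Fin.init x l) / p l.1 (Fin.init x l)
    set R := ∏ l : Fin M, T (l.1 + 1) (Fin.init x l.succ) (Fin.init x l.castSucc)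
    calc p 0 (x 0) * (A * T (M + 1) a b) * (B * (p (M + 1 + 1) b / p (M + 1) b))
        = (p 0 (x 0) * A * B) * (T (M + 1) a b * (p (M + 1 + 1) b / p (M + 1) b)) := by ring
      _ = (p (M + 1) a * R) * (T (M + 1) a b * (p (M + 1 + 1) b / p (M + 1) b)) := by
          rw [hinit]
      _ = (p (M + 1) a * T (M + 1) a b) * (R * (p (M + 1 + 1) b / p (M + 1) b)) := by ring
      _ = (p (M + 1) b * T (M + 1) b a) * (R * (p (M + 1 + 1) b / p (M + 1) b)) := by
          rw [hdb1]
      _ = (p (M + 1) b / p (M + 1) b) * (p (M + 1 + 1) b * (R * T (M + 1) b a)) := by ring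
      _ = p (M + 1 + 1) b * (R * T (M + 1) b a) := by rw [div_self hne, one_mul]


lemma lemB {S : Type*} [Fintype S] (T : ℕ → S → S → ℝ) :
    ∀ M : ℕ, ∀ a : ℕ, (∀ l, a + 1 ≤ l → l ≤ a + M → ∀ s : S, ∑ t : S, T l s t = 1) →
      ∀ t : S,
      ∑ x ∈ Finset.univ.filter (fun x : Fin (M + 1) → S => x (Fin.last M) = t),
        ∏ l : Fin M, T (a + l.1 + 1) (x l.succ) (x l.castSucc) = 1 := by
  intro M
  induction M with
  | zero =>
    intro a _ t
    rw [Finset.sum_filter]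
    simp only [Finset.univ_eq_empty, Finset.prod_empty]
    rw [Fintype.sum_eq_single (fun _ : Fin (0 + 1) => t)
      (fun x hx => if_neg (fun h => hx (funext fun i => by
        rw [show i = Fin.last 0 from Fin.ext (by have := i.isLt; omega)]; exact h)))]
    simp
  | succ M ih =>
    intro a hrow t
    rw [Finset.sum_filter]
    rw [← Fintype.sum_equiv (Fin.consEquiv (fun _ : Fin (M + 2) => S))
      (fun q => if (Fin.cons q.1 q.2 : Fin (M + 2) → S) (Fin.last (M + 1)) = t then
        ∏ l : Fin (M + 1), T (a + l.1 + 1)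
          ((Fin.cons q.1 q.2 : Fin (M + 2) → S) l.succ)
          ((Fin.cons q.1 q.2 : Fin (M + 2) → S) l.castSucc) else 0)
      _ (fun q => rfl)]
    rw [Fintype.sum_prod_type]
    have key : ∀ s : S, ∀ y : Fin (M + 1) → S,
        (if (Fin.cons s y : Fin (M + 2) → S) (Fin.last (M + 1)) = t then
          ∏ l : Fin (M + 1), T (a + l.1 + 1)
            ((Fin.cons s y : Fin (M + 2) → S) l.succ)
            ((Fin.cons s y : Fin (M + 2) → S) l.castSucc) else 0)
        = (if y (Fin.last M) = t then
            T (a + 1) (y 0) s *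
            ∏ l : Fin M, T ((a + 1) + l.1 + 1) (y l.succ) (y l.castSucc) else 0) := by
      intro s y
      have hc : (Fin.cons s y : Fin (M + 2) → S) (Fin.last (M + 1)) = y (Fin.last M) := by
        rw [show Fin.last (M + 1) = (Fin.last M).succ from rfl, Fin.cons_succ]
      rw [hc]
      congr 1
      rw [Fin.prod_univ_succ]
      congr 1
      refine Finset.prod_congr rfl (fun l _ => ?_)
      rw [Fin.cons_succ, ← Fin.succ_castSucc, Fin.cons_succ, Fin.val_succ,
        show a + (l.1 + 1) + 1 = a + 1 + l.1 + 1 by omega]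
    calc ∑ s : S, ∑ y : Fin (M + 1) → S,
          (if (Fin.cons s y : Fin (M + 2) → S) (Fin.last (M + 1)) = t then
            ∏ l : Fin (M + 1), T (a + l.1 + 1)
              ((Fin.cons s y : Fin (M + 2) → S) l.succ)
              ((Fin.cons s y : Fin (M + 2) → S) l.castSucc) else 0)
        = ∑ s : S, ∑ y : Fin (M + 1) → S,
          (if y (Fin.last M) = t then
            T (a + 1) (y 0) s *
            ∏ l : Fin M, T ((a + 1) + l.1 + 1) (y l.succ) (y l.castSucc) else 0) := by
          exact Finset.sum_congr rfl fun s _ => Finset.sum_congr rfl fun y _ => key s y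
      _ = ∑ y : Fin (M + 1) → S, ∑ s : S,
          (if y (Fin.last M) = t then
            T (a + 1) (y 0) s *
            ∏ l : Fin M, T ((a + 1) + l.1 + 1) (y l.succ) (y l.castSucc) else 0) :=
          Finset.sum_comm
      _ = ∑ y : Fin (M + 1) → S,
          (if y (Fin.last M) = t then
            ∏ l : Fin M, T ((a + 1) + l.1 + 1) (y l.succ) (y l.castSucc) else 0) := by
          refine Finset.sum_congr rfl fun y _ => ?_
          by_cases h : y (Fin.last M) = t
          · simp only [h, if_true, ← Finset.sum_mul]
            rw [hrow (a + 1) (by omega) (by omega) (y 0), one_mul]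
          · simp [h]
      _ = 1 := by
          rw [← Finset.sum_filter]
          exact ih (a + 1) (fun l h1 h2 => hrow l (by omega) (by omega)) t


lemma ais_main {S : Type*} [Fintype S] (M : ℕ)
    (p : ℕ → S → ℝ) (hp : ∀ l ≤ M + 1, ∀ s : S, 0 < p l s)
    (T : ℕ → S → S → ℝ)
    (hTrow : ∀ l, 1 ≤ l → l ≤ M → ∀ s : S, ∑ t : S, T l s t = 1)
    (hdb : ∀ l, 1 ≤ l → l ≤ M → ∀ s t : S, p l s * T l s t = p l t * T l t s)
    (t : S) :
    ∑ x ∈ Finset.univ.filter (fun x : Fin (M + 1) → S => x ⟨M, Nat.lt_succ_self M⟩ = t),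
      p 0 (x ⟨0, M.succ_pos⟩) *
        (∏ l : Fin M, T (l.1 + 1) (x ⟨l.1, by have := l.isLt; omega⟩)
          (x ⟨l.1 + 1, by have := l.isLt; omega⟩)) *
        (∏ l : Fin (M + 1), p (l.1 + 1) (x l) / p l.1 (x l))
    = p (M + 1) t := by
  have h1 : ∀ (l : Fin M) (h : l.1 < M + 1), (⟨l.1, h⟩ : Fin (M + 1)) = l.castSucc :=
    fun l h => rfl
  have h2 : ∀ (l : Fin M) (h : l.1 + 1 < M + 1), (⟨l.1 + 1, h⟩ : Fin (M + 1)) = l.succ :=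
    fun l h => rfl
  have h3 : ∀ (h : M < M + 1), (⟨M, h⟩ : Fin (M + 1)) = Fin.last M := fun h => rfl
  have h4 : ∀ (h : 0 < M + 1), (⟨0, h⟩ : Fin (M + 1)) = 0 := fun h => Fin.mk_zero
  simp only [h1, h2, h3, h4]
  have step : ∀ x ∈ Finset.univ.filter (fun x : Fin (M + 1) → S => x (Fin.last M) = t),
      p 0 (x 0) * (∏ l : Fin M, T (l.1 + 1) (x l.castSucc) (x l.succ)) *
        (∏ l : Fin (M + 1), p (l.1 + 1) (x l) / p l.1 (x l))
      = p (M + 1) t * ∏ l : Fin M, T (l.1 + 1) (x l.succ) (x l.castSucc) := by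
    intro x hx
    have hxl : x (Fin.last M) = t := (Finset.mem_filter.mp hx).2
    rw [lemA p T M hp hdb x, hxl]
  rw [Finset.sum_congr rfl step, ← Finset.mul_sum]
  have hB := lemB T M 0 (fun l hl1 hl2 => hTrow l (by omega) (by omega)) t
  simp only [zero_add] at hB
  rw [hB, mul_one]

/-- Correctness of annealed importance sampling. Let `S` be a finite type,
`L ≥ 1`, `p 0, …, p L : S → ℝ` strictly positive with `p 0` and `p L` summing to `1`, and
let the kernels `T 1, …, T (L-1)` be nonnegative, row-stochastic and satisfy detailed
balance with respect to the corresponding `p l`. A path `(x 1, …, x L) ∈ S^L` is encoded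
as `x : Fin L → S`, with `x ⟨l-1, _⟩` playing the role of `x l`. Then for every `t : S`,
the sum over all paths ending at `t` of the path probability
`p 0 (x 1) · Π_{l=1}^{L-1} T l (x l) (x (l+1))` times the importance weight
`Π_{l=1}^{L} p l (x l) / p (l-1) (x l)` equals `p L t`. -/
theorem ais_correctness (S : Type*) [Fintype S] (L : ℕ) (hL : 1 ≤ L)
    (p : ℕ → S → ℝ) (hp : ∀ l ≤ L, ∀ s : S, 0 < p l s)
    (hp0 : ∑ s : S, p 0 s = 1) (hpL : ∑ s : S, p L s = 1)
    (T : ℕ → S → S → ℝ)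
    (hTnn : ∀ l, 1 ≤ l → l ≤ L - 1 → ∀ s t : S, 0 ≤ T l s t)
    (hTrow : ∀ l, 1 ≤ l → l ≤ L - 1 → ∀ s : S, ∑ t : S, T l s t = 1)
    (hdb : ∀ l, 1 ≤ l → l ≤ L - 1 → ∀ s t : S, p l s * T l s t = p l t * T l t s)
    (t : S) :
    ∑ x ∈ Finset.univ.filter (fun x : Fin L → S => x ⟨L - 1, by omega⟩ = t),
      p 0 (x ⟨0, by omega⟩) *
        (∏ l : Fin (L - 1), T (l.1 + 1) (x ⟨l.1, by have := l.isLt; omega⟩)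
          (x ⟨l.1 + 1, by have := l.isLt; omega⟩)) *
        (∏ l : Fin L, p (l.1 + 1) (x l) / p l.1 (x l))
    = p L t := by
  obtain ⟨M, rfl⟩ : ∃ M, L = M + 1 := ⟨L - 1, by omega⟩
  exact ais_main M p hp T (fun l a b => hTrow l a b) (fun l a b => hdb l a b) t
end
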